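/- arXiv:2306.16317 — 4 statements merged into one kernel-verified Lean document; each statement's English description precedes it below -/
import Mathlib

section
/- Let A and A' be full-rank a×a matrices over a field F, and suppose P ∈ GL_{a+b}(F) and Q ∈ GL_{a+c}(F) satisfy P · [[A, 0],[0, 0_{b×c}]] · Qᵀ = [[A', 0],[0, 0_{b×c}]] (block matrices with diagonal blocks of sizes a and b, resp. a and c). Then P and Q are block upper-triangular, i.e., P = [[P₁₁, P₁₂],[0, P₂₂]] and Q = [[Q₁₁, Q₁₂],[0, Q₂₂]], with P₁₁ A Q₁₁ᵀ = A', P₂₂ ∈ GL_b(F), and Q₂₂ ∈ GL_c(F). -/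
open Matrix

theorem stmt_0 {F : Type*} [Field F] {a b c : ℕ}
    (A A' : Matrix (Fin a) (Fin a) F) (hA : IsUnit A) (hA' : IsUnit A')
    (P : Matrix (Fin a ⊕ Fin b) (Fin a ⊕ Fin b) F)
    (Q : Matrix (Fin a ⊕ Fin c) (Fin a ⊕ Fin c) F)
    (hP : IsUnit P) (hQ : IsUnit Q)
    (h : P * (fromBlocks A 0 0 (0 : Matrix (Fin b) (Fin c) F)) * Qᵀ
        = fromBlocks A' 0 0 0) :
    P.toBlocks₂₁ = 0 ∧ Q.toBlocks₂₁ = 0 ∧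
      P.toBlocks₁₁ * A * (Q.toBlocks₁₁)ᵀ = A' ∧
      IsUnit P.toBlocks₂₂ ∧ IsUnit Q.toBlocks₂₂ := by
  set P11 := P.toBlocks₁₁ with hP11
  set P12 := P.toBlocks₁₂
  set P21 := P.toBlocks₂₁
  set P22 := P.toBlocks₂₂
  set Q11 := Q.toBlocks₁₁
  set Q12 := Q.toBlocks₁₂
  set Q21 := Q.toBlocks₂₁
  set Q22 := Q.toBlocks₂₂
  have hPB : P = fromBlocks P11 P12 P21 P22 := (fromBlocks_toBlocks P).symm
  have hQB : Q = fromBlocks Q11 Q12 Q21 Q22 := (fromBlocks_toBlocks Q).symm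
  rw [hPB, hQB, fromBlocks_transpose, fromBlocks_multiply, fromBlocks_multiply] at h
  simp only [Matrix.mul_zero, Matrix.zero_mul, add_zero, zero_add] at h
  have h11 : P11 * A * Q11ᵀ = A' := congrArg toBlocks₁₁ h
  have h12 : P11 * A * Q21ᵀ = 0 := congrArg toBlocks₁₂ h
  have h21 : P21 * A * Q11ᵀ = 0 := congrArg toBlocks₂₁ h
  -- units
  have hdet : IsUnit (P11.det * (A.det * Q11ᵀ.det)) := by
    have : IsUnit (P11 * A * Q11ᵀ).det := h11 ▸ (Matrix.isUnit_iff_isUnit_det A').mp hA'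
    simpa [Matrix.det_mul, mul_assoc] using this
  have hP11u : IsUnit P11 := (Matrix.isUnit_iff_isUnit_det _).mpr (isUnit_of_mul_isUnit_left hdet)
  have hQ11u : IsUnit Q11ᵀ := (Matrix.isUnit_iff_isUnit_det _).mpr
    (isUnit_of_mul_isUnit_right (isUnit_of_mul_isUnit_right hdet))
  have hdetPA : IsUnit (P11 * A).det := by
    simpa [Matrix.det_mul] using ((Matrix.isUnit_iff_isUnit_det _).mp (hP11u.mul hA))
  have hQ21 : Q21 = 0 := by
    have h12' : (P11 * A) * Q21ᵀ = 0 := h12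
    have ht : Q21ᵀ = 0 := by
      calc Q21ᵀ = (P11 * A)⁻¹ * ((P11 * A) * Q21ᵀ) := by
              rw [← Matrix.mul_assoc, Matrix.nonsing_inv_mul _ hdetPA, Matrix.one_mul]
        _ = 0 := by rw [h12', Matrix.mul_zero]
    rw [← Matrix.transpose_zero] at ht
    exact Matrix.transpose_injective ht
  have hP21 : P21 = 0 := by
    have h21' : P21 * (A * Q11ᵀ) = 0 := by rw [← Matrix.mul_assoc]; exact h21
    have hAQu : IsUnit (A * Q11ᵀ).det := by
      simpa [Matrix.det_mul] using ((Matrix.isUnit_iff_isUnit_det _).mp (hA.mul hQ11u))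
    calc P21 = P21 * (A * Q11ᵀ) * (A * Q11ᵀ)⁻¹ := by
          rw [Matrix.mul_assoc, Matrix.mul_nonsing_inv _ hAQu, Matrix.mul_one]
      _ = 0 := by rw [h21', Matrix.zero_mul]
  refine ⟨hP21, hQ21, h11, ?_, ?_⟩
  · have : IsUnit P.det := (Matrix.isUnit_iff_isUnit_det P).mp hP
    rw [hPB, hP21, Matrix.det_fromBlocks_zero₂₁] at this
    exact (Matrix.isUnit_iff_isUnit_det _).mpr (isUnit_of_mul_isUnit_right this)
  · have : IsUnit Q.det := (Matrix.isUnit_iff_isUnit_det Q).mp hQ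
    rw [hQB, hQ21, Matrix.det_fromBlocks_zero₂₁] at this
    exact (Matrix.isUnit_iff_isUnit_det _).mpr (isUnit_of_mul_isUnit_right this)
end

section
/- Let G = (L ∪ R, F) be a regular bipartite graph with L = R = [n], and let 𝒜_G be the associated 3-way array with frontal slices E_{e} for e ∈ F. If G is asymmetric (has no nontrivial automorphism preserving the bipartition classes), then every automorphism (R, S, T) of 𝒜_G has R, S diagonal (and consequently T diagonal). -/
open Matrix

/-- The action of a triple of matrices on an `ι₁ × ι₂ × ι₃` 3-way array. -/
def tact3 {F : Type*} [Field F] {ι₁ ι₂ ι₃ : Type*} [Fintype ι₁] [Fintype ι₂] [Fintype ι₃]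
    (P : Matrix ι₁ ι₁ F) (Q : Matrix ι₂ ι₂ F) (R : Matrix ι₃ ι₃ F)
    (T : ι₁ → ι₂ → ι₃ → F) : ι₁ → ι₂ → ι₃ → F :=
  fun i j k => ∑ i' : ι₁, ∑ j' : ι₂, ∑ k' : ι₃,
    P i i' * Q j j' * R k k' * T i' j' k'

/-- The 3-way array associated to a bipartite graph with edge list `e`. -/
def graphTensor {F : Type*} [Field F] {n ℓ : ℕ} (e : Fin ℓ → Fin n × Fin n) :
    Fin n → Fin n → Fin ℓ → F :=
  fun i j k => if e k = (i, j) then 1 else 0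

private lemma mulVec_eq_zero {F : Type*} [Field F] {m : ℕ} {T : Matrix (Fin m) (Fin m) F}
    (hT : IsUnit T) {f : Fin m → F} (h : T.mulVec f = 0) : f = 0 := by
  have hdet : IsUnit T.det := (Matrix.isUnit_iff_isUnit_det T).mp hT
  calc f = (T⁻¹ * T).mulVec f := by rw [Matrix.nonsing_inv_mul T hdet, Matrix.one_mulVec]
  _ = T⁻¹.mulVec (T.mulVec f) := by rw [Matrix.mulVec_mulVec]
  _ = 0 := by rw [h, Matrix.mulVec_zero]

/-- Core combinatorial lemma: under regularity and one-sided asymmetry, every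
column of `R` is supported on a single row. -/
private lemma aux_core {F : Type*} [Field F] {n ℓ : ℕ}
    (e : Fin ℓ → Fin n × Fin n) (dL : ℕ)
    (hregL : ∀ a : Fin n, (Finset.univ.filter fun b => ∃ k, e k = (a, b)).card = dL)
    (hasym1 : ∀ σ : Equiv.Perm (Fin n),
      (∀ a b, (∃ k, e k = (a, b)) → ∃ k, e k = (σ a, b)) → σ = 1)
    (R S : Matrix (Fin n) (Fin n) F) (hS : IsUnit S)
    (key : ∀ a b, (∃ k, e k = (a, b)) → ∀ i j, R i a ≠ 0 → S j b ≠ 0 → ∃ k, e k = (i, j)) :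
    ∀ a i1 i2, R i1 a ≠ 0 → R i2 a ≠ 0 → i1 = i2 := by
  intro a i1 i2 h1 h2
  by_contra hne
  set N : Fin n → Finset (Fin n) :=
    fun x => Finset.univ.filter fun y => ∃ k, e k = (x, y) with hN
  have hmemN : ∀ x y, y ∈ N x ↔ ∃ k, e k = (x, y) := by
    intro x y; simp [hN]
  -- subset claim
  have hsub : ∀ j1 j2, R j1 a ≠ 0 → R j2 a ≠ 0 → N j1 ⊆ N j2 := by
    intro j1 j2 hj1 hj2 b' hb'
    have hedge1 : ∃ k, e k = (j1, b') := (hmemN _ _).mp hb'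
    -- columns of S indexed by N a are supported in N j1
    have hsupp : ∀ b ∈ N a, ∀ j, S j b ≠ 0 → j ∈ N j1 := by
      intro b hb j hSj
      exact (hmemN _ _).mpr (key a b ((hmemN _ _).mp hb) j1 j hj1 hSj)
    have hexists : ∃ b ∈ N a, S b' b ≠ 0 := by
      by_contra hno
      push_neg at hno
      set s : Finset (Fin n) := (N j1).erase b' with hs
      have hli : LinearIndependent F (fun (b : ↥(N a)) => (fun j : ↥s => S j.1 b.1)) := by
        rw [Fintype.linearIndependent_iff]
        intro c hc b
        set c' : Fin n → F := fun x => if hx : x ∈ N a then c ⟨x, hx⟩ else 0 with hc'def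
        have hsum : ∀ j, S.mulVec c' j = ∑ b : ↥(N a), S j b * c b := by
          intro j
          rw [Matrix.mulVec, dotProduct]
          rw [← Finset.sum_subset (Finset.subset_univ (N a))]
          · rw [← Finset.sum_attach (N a) (fun x => S j x * c' x)]
            refine Finset.sum_congr rfl fun b _ => ?_
            simp [hc'def, b.2]
          · intro x _ hx
            simp [hc'def, hx]
        have hg : S.mulVec c' = 0 := by
          funext j
          rw [hsum j]
          by_cases hj : j ∈ s
          · have := congrFun hc ⟨j, hj⟩
            simpa [mul_comm] using this
          · simp only [Pi.zero_apply]
            refine Finset.sum_eq_zero fun b _ => ?_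
            rcases eq_or_ne j b' with rfl | hjb
            · rw [hno b b.2, zero_mul]
            · have : j ∉ N j1 := fun hmem => hj (Finset.mem_erase.mpr ⟨hjb, hmem⟩)
              have : S j b = 0 := by
                by_contra hSjb
                exact this (hsupp b b.2 j hSjb)
              rw [this, zero_mul]
        have hc0 : c' = 0 := mulVec_eq_zero hS hg
        have : c' b.1 = c b := by simp [hc'def, b.2]
        rw [hc0] at this
        exact this.symm
      have hcard := hli.fintype_card_le_finrank
      rw [Module.finrank_fintype_fun_eq_card, Fintype.card_coe, Fintype.card_coe] at hcard
      have hNa : (N a).card = dL := hregL a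
      have hj1card : (N j1).card = dL := hregL j1
      have hscard : s.card = dL - 1 := by
        rw [hs, Finset.card_erase_of_mem hb', hj1card]
      have hdL : 1 ≤ dL := by
        rw [← hj1card]
        exact Finset.card_pos.mpr ⟨b', hb'⟩
      rw [hNa, hscard] at hcard
      omega
    obtain ⟨b, hbNa, hSb⟩ := hexists
    exact (hmemN _ _).mpr (key a b ((hmemN _ _).mp hbNa) j2 b' hj2 hSb)
  have hNeq : N i1 = N i2 := Finset.Subset.antisymm (hsub i1 i2 h1 h2) (hsub i2 i1 h2 h1)
  have hswap : ∀ x y, (∃ k, e k = (x, y)) → ∃ k, e k = (Equiv.swap i1 i2 x, y) := by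
    intro x y hxy
    rcases eq_or_ne x i1 with rfl | hx1
    · rw [Equiv.swap_apply_left]
      exact (hmemN _ _).mp (hNeq ▸ (hmemN _ _).mpr hxy)
    · rcases eq_or_ne x i2 with rfl | hx2
      · rw [Equiv.swap_apply_right]
        exact (hmemN _ _).mp (hNeq ▸ (hmemN _ _).mpr hxy)
      · rw [Equiv.swap_apply_of_ne_of_ne hx1 hx2]
        exact hxy
  have hone := hasym1 (Equiv.swap i1 i2) hswap
  have : Equiv.swap i1 i2 i1 = i1 := by rw [hone]; rfl
  rw [Equiv.swap_apply_left] at this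
  exact hne this.symm

/-- If `G` is a regular asymmetric bipartite graph, every automorphism `(R, S, T)`
of the associated 3-way array `𝒜_G` consists of diagonal matrices. -/
theorem stmt_10 {F : Type*} [Field F] {n ℓ : ℕ}
    (e : Fin ℓ → Fin n × Fin n) (he : Function.Injective e)
    (dL dR : ℕ)
    (hregL : ∀ a : Fin n, (Finset.univ.filter fun b => ∃ k, e k = (a, b)).card = dL)
    (hregR : ∀ b : Fin n, (Finset.univ.filter fun a => ∃ k, e k = (a, b)).card = dR)
    (hasym : ∀ σ τ : Equiv.Perm (Fin n),
      (∀ a b, (∃ k, e k = (a, b)) → ∃ k, e k = (σ a, τ b)) → σ = 1 ∧ τ = 1)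
    (R S : Matrix (Fin n) (Fin n) F) (T : Matrix (Fin ℓ) (Fin ℓ) F)
    (hR : IsUnit R) (hS : IsUnit S) (hT : IsUnit T)
    (haut : tact3 R S T (graphTensor e) = graphTensor (F := F) e) :
    (∀ i j, i ≠ j → R i j = 0) ∧ (∀ i j, i ≠ j → S i j = 0) ∧
      (∀ i j, i ≠ j → T i j = 0) := by
  -- collapse the triple sum in `haut`
  have hc : ∀ i j k, (∑ k', R i (e k').1 * S j (e k').2 * T k k') =
      (if e k = (i, j) then (1 : F) else 0) := by
    intro i j k
    have h0 := congrFun (congrFun (congrFun haut i) j) k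
    simp only [tact3, graphTensor] at h0
    rw [← h0]
    have h1 : ∀ i' : Fin n, (∑ j' : Fin n, ∑ k' : Fin ℓ,
        R i i' * S j j' * T k k' * (if e k' = (i', j') then (1:F) else 0)) =
        ∑ k' : Fin ℓ, ∑ j' : Fin n,
        R i i' * S j j' * T k k' * (if e k' = (i', j') then (1:F) else 0) :=
      fun i' => Finset.sum_comm
    rw [Finset.sum_congr rfl fun i' _ => h1 i', Finset.sum_comm]
    refine Finset.sum_congr rfl fun k' _ => ?_
    rw [Finset.sum_eq_single (e k').1]
    · rw [Finset.sum_eq_single (e k').2]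
      · simp
      · intro b _ hb
        rw [if_neg (fun h => hb (congrArg Prod.snd h).symm), mul_zero]
      · simp
    · intro a _ ha
      refine Finset.sum_eq_zero fun b _ => ?_
      rw [if_neg (fun h => ha (congrArg Prod.fst h).symm), mul_zero]
    · simp
  -- the key combinatorial consequence of `haut`
  have key : ∀ a b, (∃ k, e k = (a, b)) → ∀ i j, R i a ≠ 0 → S j b ≠ 0 → ∃ k, e k = (i, j) := by
    rintro a b ⟨k0, hk0⟩ i j hRi hSj
    by_contra hno
    have hf : (fun k' => R i (e k').1 * S j (e k').2) = 0 := by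
      apply mulVec_eq_zero hT
      funext k
      rw [Matrix.mulVec, dotProduct]
      have hcomm : (∑ k', T k k' * (R i (e k').1 * S j (e k').2))
          = ∑ k', R i (e k').1 * S j (e k').2 * T k k' :=
        Finset.sum_congr rfl fun k' _ => by ring
      rw [hcomm, hc i j k, if_neg (fun h => hno ⟨k, h⟩), Pi.zero_apply]
    have hk0' := congrFun hf k0
    rw [hk0, Pi.zero_apply] at hk0'
    exact mul_ne_zero hRi hSj hk0'
  have claimR := aux_core e dL hregL
    (fun σ hσ => (hasym σ 1 (fun a b h => by simpa using hσ a b h)).1) R S hS key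
  -- the swapped graph, for the `S` side
  set e' : Fin ℓ → Fin n × Fin n := fun k => ((e k).2, (e k).1) with he'def
  have he'iff : ∀ k a b, e' k = (a, b) ↔ e k = (b, a) := by
    intro k a b
    simp [he'def, Prod.ext_iff, and_comm]
  have hregR' : ∀ a : Fin n, (Finset.univ.filter fun b => ∃ k, e' k = (a, b)).card = dR := by
    intro a
    rw [← hregR a]
    congr 1
    ext b
    simp [he'iff]
  have hasym1' : ∀ τ : Equiv.Perm (Fin n),
      (∀ a b, (∃ k, e' k = (a, b)) → ∃ k, e' k = (τ a, b)) → τ = 1 := by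
    intro τ hτ
    refine (hasym 1 τ fun a b h => ?_).2
    obtain ⟨k1, hk1⟩ := hτ b a ⟨h.choose, (he'iff _ _ _).mpr h.choose_spec⟩
    exact ⟨k1, by simpa using (he'iff _ _ _).mp hk1⟩
  have key' : ∀ a b, (∃ k, e' k = (a, b)) → ∀ i j, S i a ≠ 0 → R j b ≠ 0 →
      ∃ k, e' k = (i, j) := by
    rintro a b ⟨k0, hk0⟩ i j hSi hRj
    obtain ⟨k1, hk1⟩ := key b a ⟨k0, (he'iff _ _ _).mp hk0⟩ j i hRj hSi
    exact ⟨k1, (he'iff _ _ _).mpr hk1⟩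
  have claimS := aux_core e' dR hregR' hasym1' S R hR key'
  -- every column has a nonzero entry
  have colN : ∀ (M : Matrix (Fin n) (Fin n) F), IsUnit M → ∀ a, ∃ i, M i a ≠ 0 := by
    intro M hM a
    by_contra hno
    push_neg at hno
    have hz : M.mulVec (Pi.single a 1) = 0 := by
      funext i
      rw [Matrix.mulVec, dotProduct]
      refine Finset.sum_eq_zero fun x _ => ?_
      rcases eq_or_ne x a with rfl | hx
      · rw [hno i, zero_mul]
      · rw [Pi.single_eq_of_ne hx, mul_zero]
    have h0 := congrFun (mulVec_eq_zero hM hz) a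
    rw [Pi.single_eq_same] at h0
    exact one_ne_zero h0
  choose p hp using colN R hR
  choose q hq using colN S hS
  -- injectivity of the support maps
  have inj_of : ∀ (M : Matrix (Fin n) (Fin n) F) (hM : IsUnit M) (r : Fin n → Fin n),
      (∀ a, M (r a) a ≠ 0) → (∀ a i1 i2, M i1 a ≠ 0 → M i2 a ≠ 0 → i1 = i2) →
      Function.Injective r := by
    intro M hM r hr hclaim a a' hra
    by_contra hne
    set w : Fin n → F :=
      fun x => if x = a then M (r a') a' else if x = a' then -(M (r a) a) else 0 with hw
    have hMw : M.mulVec w = 0 := by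
      funext i
      rw [Matrix.mulVec, dotProduct]
      simp only [Pi.zero_apply]
      have hsum : (∑ x, M i x * w x) = M i a * w a + M i a' * w a' := by
        rw [← Finset.sum_subset (Finset.subset_univ ({a, a'} : Finset (Fin n)))]
        · rw [Finset.sum_pair hne]
        · intro x _ hx
          simp only [Finset.mem_insert, Finset.mem_singleton, not_or] at hx
          rw [hw]
          simp [hx.1, hx.2]
      rw [hsum]
      have hwa : w a = M (r a') a' := by rw [hw]; simp
      have hwa' : w a' = -(M (r a) a) := by
        rw [hw]
        simp [(Ne.symm hne : a' ≠ a)]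
      rw [hwa, hwa']
      rcases eq_or_ne i (r a) with rfl | hi
      · have h1 : M (r a) a' = M (r a') a' := by rw [hra]
        rw [h1]
        ring
      · have h2 : M i a = 0 := by
          by_contra hMi
          exact hi (hclaim a i (r a) hMi (hr a))
        have h3 : M i a' = 0 := by
          by_contra hMi
          have h4 : i = r a' := hclaim a' i (r a') hMi (hr a')
          exact hi (h4.trans hra.symm)
        rw [h2, h3]
        ring
    have hwz := congrFun (mulVec_eq_zero hM hMw) a
    rw [hw] at hwz
    simp only [if_pos rfl, Pi.zero_apply] at hwz
    exact hr a' hwz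
  have pinj := inj_of R hR p hp claimR
  have qinj := inj_of S hS q hq claimS
  have pbij : Function.Bijective p := (Fintype.bijective_iff_injective_and_card p).mpr ⟨pinj, rfl⟩
  have qbij : Function.Bijective q := (Fintype.bijective_iff_injective_and_card q).mpr ⟨qinj, rfl⟩
  obtain ⟨hσ1, hτ1⟩ := hasym (Equiv.ofBijective p pbij) (Equiv.ofBijective q qbij)
    (fun a b h => key a b h (p a) (q b) (hp a) (hq b))
  have hpa : ∀ a, p a = a := by
    intro a
    have : Equiv.ofBijective p pbij a = (1 : Equiv.Perm (Fin n)) a := by rw [hσ1]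
    simpa using this
  have hqa : ∀ a, q a = a := by
    intro a
    have : Equiv.ofBijective q qbij a = (1 : Equiv.Perm (Fin n)) a := by rw [hτ1]
    simpa using this
  have Rdiag : ∀ i j, i ≠ j → R i j = 0 := by
    intro i j hij
    by_contra hRij
    exact hij ((claimR j i (p j) hRij (hp j)).trans (hpa j))
  have Sdiag : ∀ i j, i ≠ j → S i j = 0 := by
    intro i j hij
    by_contra hSij
    exact hij ((claimS j i (q j) hSij (hq j)).trans (hqa j))
  refine ⟨Rdiag, Sdiag, ?_⟩
  intro k k' hkk'
  have h := hc (e k').1 (e k').2 k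
  rw [Finset.sum_eq_single k'] at h
  · rw [if_neg (fun hek => hkk' (he hek))] at h
    have hR1 : R (e k').1 (e k').1 ≠ 0 := by
      have h' := hp (e k').1
      rwa [hpa (e k').1] at h'
    have hS1 : S (e k').2 (e k').2 ≠ 0 := by
      have h' := hq (e k').2
      rwa [hqa (e k').2] at h'
    by_contra hT0
    exact mul_ne_zero (mul_ne_zero hR1 hS1) hT0 h
  · intro k'' _ hk''
    have hnee : e k'' ≠ e k' := fun hh => hk'' (he hh)
    have hcases : (e k'').1 ≠ (e k').1 ∨ (e k'').2 ≠ (e k').2 := by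
      by_contra hb
      push_neg at hb
      exact hnee (Prod.ext hb.1 hb.2)
    rcases hcases with h' | h'
    · rw [Rdiag _ _ (Ne.symm h'), zero_mul, zero_mul]
    · rw [Sdiag _ _ (Ne.symm h'), mul_zero, zero_mul]
  · intro hk'
    exact absurd (Finset.mem_univ k') hk'
end

section
/- With notation as in the diagonal-gadget lemma: if R, S ∈ GL_n(F) and for every (a,b) ∈ F and all c,d, the condition r_{c,a} s_{d,b} ≠ 0 implies (c,d) ∈ F (where F is the edge set of an asymmetric regular bipartite graph G), and R = D + R₁ with D invertible diagonal and R₁(c,a) ≠ 0 for some c ≠ a, then vertices a and c of L have the same neighborhood in G, contradicting asymmetry when G is regular. In particular, under these hypotheses R₁ = 0, i.e., R is diagonal. -/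
open Matrix

/-- In the setting of the diagonal-gadget lemma: `E` is the edge relation of a regular,
asymmetric bipartite graph on `[n] ∪ [n]`; `R, S` are invertible matrices with nonzero
diagonal (i.e. `R = D + R₁` with `D` invertible diagonal, and similarly for `S`), and
`r_{c,a} s_{d,b} ≠ 0` with `(a,b) ∈ E` implies `(c,d) ∈ E`.  Then whenever
`R₁(c,a) ≠ 0` for some `c ≠ a`, vertices `a` and `c` have the same neighbourhood;
and in particular `R₁ = 0`, i.e. `R` is diagonal. -/
theorem stmt_11 {F : Type*} [Field F] {n : ℕ}
    (E : Fin n → Fin n → Prop) [∀ a b, Decidable (E a b)]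
    (dL dR : ℕ)
    (hregL : ∀ a : Fin n, (Finset.univ.filter fun b => E a b).card = dL)
    (hregR : ∀ b : Fin n, (Finset.univ.filter fun a => E a b).card = dR)
    (hasym : ∀ σ τ : Equiv.Perm (Fin n),
      (∀ a b, E a b → E (σ a) (τ b)) → σ = 1 ∧ τ = 1)
    (R S : Matrix (Fin n) (Fin n) F) (hRu : IsUnit R) (hSu : IsUnit S)
    (hRdiag : ∀ a, R a a ≠ 0) (hSdiag : ∀ b, S b b ≠ 0)
    (hcond : ∀ a b c d, E a b → R c a * S d b ≠ 0 → E c d) :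
    (∀ a c, c ≠ a → R c a ≠ 0 → ∀ b, (E a b ↔ E c b)) ∧
      (∀ a c, c ≠ a → R c a = 0) := by
  have key : ∀ a c, R c a ≠ 0 → ∀ b, E a b → E c b := fun a c h b hab =>
    hcond a b c b hab (mul_ne_zero h (hSdiag b))
  have nbhd : ∀ a c, R c a ≠ 0 → ∀ b, (E a b ↔ E c b) := by
    intro a c h b
    have hsub : (Finset.univ.filter fun b => E a b) ⊆
        (Finset.univ.filter fun b => E c b) := by
      intro x hx
      simp only [Finset.mem_filter, Finset.mem_univ, true_and] at hx ⊢
      exact key a c h x hx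
    have heq := Finset.eq_of_subset_of_card_le hsub
      (le_of_eq ((hregL c).trans (hregL a).symm))
    constructor
    · exact key a c h b
    · intro hcb
      have hb : b ∈ Finset.univ.filter fun b => E c b := by
        simp [hcb]
      rw [← heq] at hb
      simpa using hb
  refine ⟨fun a c _ h => nbhd a c h, ?_⟩
  intro a c hne
  by_contra h
  have hn := nbhd a c h
  have hs := hasym (Equiv.swap a c) 1 ?_
  · exact hne ((Equiv.swap_eq_one_iff.mp hs.1).symm)
  · intro x b hxb
    simp only [Equiv.Perm.one_apply]
    rcases eq_or_ne x a with rfl | hxa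
    · rw [Equiv.swap_apply_left]
      exact (hn b).mp hxb
    rcases eq_or_ne x c with rfl | hxc
    · rw [Equiv.swap_apply_right]
      exact (hn b).mpr hxb
    · rwa [Equiv.swap_apply_of_ne_of_ne hxa hxc]
end

section
/- Let Γ be an n×m'×ℓ' tensor over a field F and let H = {g₁ ∈ GL_n : ∃ h₂ ∈ GL_{m'}, h₃ ∈ GL_{ℓ'}, (g₁,h₂,h₃)·Γ = Γ}. For any n×m×ℓ tensors A, B and subgroup G ≤ GL_n × GL_m × GL_ℓ with extension Ĝ = {(g₁, g₂⊕h₂, g₃⊕h₃) : (g₁,g₂,g₃) ∈ G, h₂ ∈ GL_{m'}, h₃ ∈ GL_{ℓ'}}, the set of Ĝ-isomorphisms from A ⊞₁ Γ to B ⊞₁ Γ equals {(g₁, g₂⊕h₂, g₃⊕h₃) : (g₁,g₂,g₃) ∈ Iso_G(A,B), (g₁,h₂,h₃) ∈ Aut(Γ)}. Consequently A and B are (G ∩ (H × GL_m × GL_ℓ))-isomorphic iff A ⊞₁ Γ and B ⊞₁ Γ are Ĝ-isomorphic. -/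
open Matrix

/-- `A ⊞₁ Γ` : attach the gadget `Γ` to `A` along the first direction. -/
def boxplus1 {F : Type*} [Field F] {n m ℓ m' ℓ' : ℕ}
    (A : Fin n → Fin m → Fin ℓ → F) (Γ : Fin n → Fin m' → Fin ℓ' → F) :
    Fin n → (Fin m ⊕ Fin m') → (Fin ℓ ⊕ Fin ℓ') → F :=
  fun i j k =>
    match j, k with
    | Sum.inl j, Sum.inl k => A i j k
    | Sum.inr j, Sum.inr k => Γ i j k
    | _, _ => 0


lemma tact3_boxplus1 {F : Type*} [Field F] {n m ℓ m' ℓ' : ℕ}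
    (A : Fin n → Fin m → Fin ℓ → F) (Γ : Fin n → Fin m' → Fin ℓ' → F)
    (g₁ : Matrix (Fin n) (Fin n) F) (g₂ : Matrix (Fin m) (Fin m) F)
    (g₃ : Matrix (Fin ℓ) (Fin ℓ) F) (h₂ : Matrix (Fin m') (Fin m') F)
    (h₃ : Matrix (Fin ℓ') (Fin ℓ') F) :
    tact3 g₁ (fromBlocks g₂ 0 0 h₂) (fromBlocks g₃ 0 0 h₃) (boxplus1 A Γ)
      = boxplus1 (tact3 g₁ g₂ g₃ A) (tact3 g₁ h₂ h₃ Γ) := by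
  funext i j k
  cases j <;> cases k <;>
    simp [tact3, boxplus1, fromBlocks, Fintype.sum_sum_type]

lemma boxplus1_inj {F : Type*} [Field F] {n m ℓ m' ℓ' : ℕ}
    (X B : Fin n → Fin m → Fin ℓ → F) (Y Γ : Fin n → Fin m' → Fin ℓ' → F) :
    boxplus1 X Y = boxplus1 B Γ ↔ (X = B ∧ Y = Γ) := by
  constructor
  · intro h
    constructor <;> funext i j k
    · exact congrFun (congrFun (congrFun h i) (Sum.inl j)) (Sum.inl k)
    · exact congrFun (congrFun (congrFun h i) (Sum.inr j)) (Sum.inr k)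
  · rintro ⟨rfl, rfl⟩; rfl

/-- Automorphism gadget lemma (simple version): the `Ĝ`-isomorphisms from `A ⊞₁ Γ` to
`B ⊞₁ Γ` are exactly the `(g₁, g₂ ⊕ h₂, g₃ ⊕ h₃)` with `(g₁,g₂,g₃)` a `G`-isomorphism
from `A` to `B` and `(g₁,h₂,h₃)` an automorphism of `Γ`; consequently `A` and `B` are
`(G ∩ (H × GL_m × GL_ℓ))`-isomorphic iff `A ⊞₁ Γ` and `B ⊞₁ Γ` are `Ĝ`-isomorphic. -/
theorem stmt_16 {F : Type*} [Field F] {n m ℓ m' ℓ' : ℕ}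
    (A B : Fin n → Fin m → Fin ℓ → F) (Γ : Fin n → Fin m' → Fin ℓ' → F)
    (G : Set (Matrix (Fin n) (Fin n) F × Matrix (Fin m) (Fin m) F ×
      Matrix (Fin ℓ) (Fin ℓ) F))
    (hGunits : ∀ p ∈ G, IsUnit p.1 ∧ IsUnit p.2.1 ∧ IsUnit p.2.2)
    (hGone : ((1, 1, 1) : Matrix (Fin n) (Fin n) F × Matrix (Fin m) (Fin m) F ×
      Matrix (Fin ℓ) (Fin ℓ) F) ∈ G)
    (hGmul : ∀ p ∈ G, ∀ q ∈ G,
      (p.1 * q.1, p.2.1 * q.2.1, p.2.2 * q.2.2) ∈ G)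
    (hGinv : ∀ p ∈ G, (p.1⁻¹, p.2.1⁻¹, p.2.2⁻¹) ∈ G) :
    (∀ g₁ g₂ g₃ (h₂ : Matrix (Fin m') (Fin m') F) (h₃ : Matrix (Fin ℓ') (Fin ℓ') F),
        (g₁, g₂, g₃) ∈ G → IsUnit h₂ → IsUnit h₃ →
        (tact3 g₁ (fromBlocks g₂ 0 0 h₂) (fromBlocks g₃ 0 0 h₃) (boxplus1 A Γ)
            = boxplus1 B Γ ↔
          (tact3 g₁ g₂ g₃ A = B ∧ tact3 g₁ h₂ h₃ Γ = Γ))) ∧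
    ((∃ (g₁ : Matrix (Fin n) (Fin n) F) (g₂ : Matrix (Fin m) (Fin m) F)
        (g₃ : Matrix (Fin ℓ) (Fin ℓ) F), (g₁, g₂, g₃) ∈ G ∧
        (∃ (h₂ : Matrix (Fin m') (Fin m') F) (h₃ : Matrix (Fin ℓ') (Fin ℓ') F),
          IsUnit h₂ ∧ IsUnit h₃ ∧ tact3 g₁ h₂ h₃ Γ = Γ) ∧
        tact3 g₁ g₂ g₃ A = B) ↔
      (∃ (g₁ : Matrix (Fin n) (Fin n) F) (g₂ : Matrix (Fin m) (Fin m) F)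
        (g₃ : Matrix (Fin ℓ) (Fin ℓ) F) (h₂ : Matrix (Fin m') (Fin m') F)
        (h₃ : Matrix (Fin ℓ') (Fin ℓ') F),
        (g₁, g₂, g₃) ∈ G ∧ IsUnit h₂ ∧ IsUnit h₃ ∧
        tact3 g₁ (fromBlocks g₂ 0 0 h₂) (fromBlocks g₃ 0 0 h₃) (boxplus1 A Γ)
          = boxplus1 B Γ)) := by
  
  have key : ∀ (g₁ : Matrix (Fin n) (Fin n) F) (g₂ : Matrix (Fin m) (Fin m) F)
      (g₃ : Matrix (Fin ℓ) (Fin ℓ) F) (h₂ : Matrix (Fin m') (Fin m') F)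
      (h₃ : Matrix (Fin ℓ') (Fin ℓ') F),
      tact3 g₁ (fromBlocks g₂ 0 0 h₂) (fromBlocks g₃ 0 0 h₃) (boxplus1 A Γ)
        = boxplus1 B Γ ↔ (tact3 g₁ g₂ g₃ A = B ∧ tact3 g₁ h₂ h₃ Γ = Γ) := by
    intro g₁ g₂ g₃ h₂ h₃
    rw [tact3_boxplus1, boxplus1_inj]
  refine ⟨fun g₁ g₂ g₃ h₂ h₃ _ _ _ => key g₁ g₂ g₃ h₂ h₃, ?_⟩
  constructor
  · rintro ⟨g₁, g₂, g₃, hG, ⟨h₂, h₃, hu2, hu3, hΓ⟩, hA⟩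
    exact ⟨g₁, g₂, g₃, h₂, h₃, hG, hu2, hu3, (key g₁ g₂ g₃ h₂ h₃).2 ⟨hA, hΓ⟩⟩
  · rintro ⟨g₁, g₂, g₃, h₂, h₃, hG, hu2, hu3, h⟩
    obtain ⟨hA, hΓ⟩ := (key g₁ g₂ g₃ h₂ h₃).1 h
    exact ⟨g₁, g₂, g₃, hG, ⟨h₂, h₃, hu2, hu3, hΓ⟩, hA⟩
end
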